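/- For every m ≥ 1, the minimum Wheeler DFA recognizing the language L_m = {cαe : α ∈ {a,b}^m} ∪ {dαf : α ∈ {a,b}^m} has at least 2^{m+2} states, while L_m is recognized by a DFA with O(m) states. Consequently, the minimum Wheeler DFA equivalent to an acyclic DFA with n states has Ω(2^{n/4}) states in the worst case. -/

import Mathlib

variable {V : Type*} {A : Type*}

/-- `Reaches E s α v`: the string `α` labels a path in the labeled graph `E`
from the state `s` to the state `v`. -/
inductive Reaches (E : V → A → V → Prop) (s : V) : List A → V → Prop
  | nil : Reaches E s [] s
  | snoc {α : List A} {u w : V} {a : A} :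
      Reaches E s α u → E u a w → Reaches E s (α ++ [a]) w

/-- Co-lexicographic (strict) order on strings: lexicographic order of reverses. -/
def ColexLt [LinearOrder A] (α β : List A) : Prop :=
  List.Lex (· < ·) α.reverse β.reverse

/-- `r` is a strict total order. -/
def StrictTotal (r : V → V → Prop) : Prop :=
  (∀ x, ¬ r x x) ∧ (∀ x y z, r x y → r y z → r x z) ∧
  (∀ x y : V, x ≠ y → r x y ∨ r y x)

/-- `r` is a Wheeler order for the labeled graph `E`: a strict total order on states
such that in-degree-0 states precede all states with positive in-degree, edges with
strictly smaller labels point to strictly smaller states, and equally-labeled edges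
from ordered sources point to weakly ordered targets. -/
def WheelerRel [LinearOrder A] (E : V → A → V → Prop) (r : V → V → Prop) : Prop :=
  StrictTotal r ∧
  (∀ x w : V, (∀ u a, ¬ E u a x) → (∃ u a, E u a w) → r x w) ∧
  (∀ u₁ a₁ v₁ u₂ a₂ v₂, E u₁ a₁ v₁ → E u₂ a₂ v₂ → a₁ < a₂ → r v₁ v₂) ∧
  (∀ u₁ v₁ u₂ v₂ a, E u₁ a v₁ → E u₂ a v₂ → r u₁ u₂ → r v₁ v₂ ∨ v₁ = v₂)

/-- The language accepted by the automaton `(V, E, F, s)`. -/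
def Lang (E : V → A → V → Prop) (F : Set V) (s : V) : Set (List A) :=
  {α | ∃ w ∈ F, Reaches E s α w}

/-- `Pref(L(A))`: the set of prefixes of accepted strings. -/
def PrefL (E : V → A → V → Prop) (F : Set V) (s : V) : Set (List A) :=
  {α | ∃ β, α ++ β ∈ Lang E F s}

/-- `I_u`: the strings in `Pref(L(A))` labeling a path from `s` to `u`. -/
def Iset (E : V → A → V → Prop) (F : Set V) (s u : V) : Set (List A) :=
  {α | α ∈ PrefL E F s ∧ Reaches E s α u}

/-- `I_α`: the set of states reached from `s` by a path labeled `α`. -/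
def Istr (E : V → A → V → Prop) (s : V) (α : List A) : Set V :=
  {w | Reaches E s α w}

/-- The language `L_m = {cαe : α ∈ {a,b}^m} ∪ {dαf : α ∈ {a,b}^m}` over the
alphabet `{a,b,c,d,e,f}` encoded as `Fin 6` (a = 0, b = 1, c = 2, d = 3, e = 4,
f = 5). -/
def Lm (m : ℕ) : Set (List (Fin 6)) :=
  {w | ∃ α : List (Fin 6), α.length = m ∧ (∀ x ∈ α, x = 0 ∨ x = 1) ∧
        (w = 2 :: (α ++ [4]) ∨ w = 3 :: (α ++ [5]))}

/-!
In a deterministic automaton with a Wheeler order, the strings reaching a fixed state form a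
colex-convex set. For `L_m`, Myhill–Nerode separates two prefixes `xB`, `x'B'`
(`x, x' ∈ {c, d}`, `B, B'` binary of length `≤ m`) as soon as `x ≠ x'` or `|B| ≠ |B'|`.
If `B₁ ≠ B₂` have equal length, say `B₁ < B₂` colexicographically, then
`cB₁ < dB₁ < cB₂ < dB₂`, so a state shared by `cB₁, cB₂` or by `dB₁, dB₂` would
also be shared by `dB₁` and `cB₂`. Hence the `2 (2^(m+1) - 1)` prefixes reach pairwise distinct
states, none of them initial or final: `2^(m+2)` states in all. Two chains of length `m`
give a DFA for `L_m` with `2m + 4` states.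
-/

def Deterministic (E : V → A → V → Prop) : Prop :=
  ∀ u a v v', E u a v → E u a v' → v = v'

namespace Reaches

variable {E : V → A → V → Prop} {s u v : V} {α β γ : List A}

theorem eq_of_nil (h : Reaches E s [] v) : v = s := by
  generalize hw : ([] : List A) = w at h
  cases h with
  | nil => rfl
  | snoc => simp at hw

theorem exists_of_snoc {a : A} (h : Reaches E s (α ++ [a]) v) :
    ∃ u, Reaches E s α u ∧ E u a v := by
  generalize hw : α ++ [a] = w at h
  cases h with
  | nil => simp at hw
  | snoc h e =>
    obtain ⟨rfl, ha⟩ := List.append_inj' hw.symm rfl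
    obtain rfl := List.singleton_inj.mp ha
    exact ⟨_, h, e⟩

theorem append (h₁ : Reaches E s α u) (h₂ : Reaches E u β v) : Reaches E s (α ++ β) v := by
  induction h₂ with
  | nil => simpa using h₁
  | snoc _ e ih => simpa using ih.snoc e

theorem exists_of_append (h : Reaches E s (α ++ β) v) :
    ∃ u, Reaches E s α u ∧ Reaches E u β v := by
  induction β using List.reverseRecOn generalizing v with
  | nil => exact ⟨v, by simpa using h, nil⟩
  | append_singleton β b ih =>
    rw [← List.append_assoc] at h
    obtain ⟨w, hw, e⟩ := exists_of_snoc h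
    obtain ⟨u, hu, hw'⟩ := ih hw
    exact ⟨u, hu, hw'.snoc e⟩

theorem unique (hdet : Deterministic E) (h₁ : Reaches E s α u) (h₂ : Reaches E s α v) :
    u = v := by
  induction h₁ generalizing v with
  | nil => exact h₂.eq_of_nil.symm
  | snoc _ e ih =>
    obtain ⟨w, hw, e'⟩ := exists_of_snoc h₂
    exact hdet _ _ _ _ e (ih hw ▸ e')

theorem exists_edge_of_ne_nil (h : Reaches E s α v) (hα : α ≠ []) : ∃ u a, E u a v := by
  cases h with
  | nil => exact absurd rfl hα
  | snoc _ e => exact ⟨_, _, e⟩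

theorem append_mem_lang {F : Set V} (hdet : Deterministic E) (hα : Reaches E s α u)
    (hβ : Reaches E s β u) (h : α ++ γ ∈ Lang E F s) : β ++ γ ∈ Lang E F s := by
  obtain ⟨w, hwF, hw⟩ := h
  obtain ⟨u', hu', hγ⟩ := exists_of_append hw
  exact ⟨w, hwF, hβ.append (unique hdet hu' hα ▸ hγ)⟩

end Reaches

theorem List.Lex.append_of_length_eq {r : A → A → Prop} {l₁ l₂ : List A}
    (h : List.Lex r l₁ l₂) (hlen : l₁.length = l₂.length) (t₁ t₂ : List A) :
    List.Lex r (l₁ ++ t₁) (l₂ ++ t₂) := by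
  induction h with
  | nil => simp at hlen
  | rel hr => exact .rel hr
  | cons _ ih => exact .cons (ih (by simpa using hlen))

section Colex

variable [LinearOrder A] {α β : List A}

theorem not_colexLt_nil : ¬ ColexLt α [] := List.not_lex_nil

theorem colexLt_append_singleton_iff {a b : A} :
    ColexLt (α ++ [a]) (β ++ [b]) ↔ a < b ∨ a = b ∧ ColexLt α β := by
  simp only [ColexLt, List.reverse_append, List.reverse_singleton, List.singleton_append,
    List.cons_lex_cons_iff]

theorem colexLt_cons_of_lt (α : List A) {x y : A} (h : x < y) : ColexLt (x :: α) (y :: α) := by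
  simpa [ColexLt] using List.Lex.append_left _ (List.Lex.rel (l₁ := []) (l₂ := []) h) α.reverse

theorem ColexLt.cons (h : ColexLt α β) (hlen : α.length = β.length) (x y : A) :
    ColexLt (x :: α) (y :: β) := by
  simpa [ColexLt] using h.append_of_length_eq (by simpa using hlen) [x] [y]

theorem colexLt_trichotomous (α β : List A) : ColexLt α β ∨ α = β ∨ ColexLt β α := by
  simpa [ColexLt] using lt_trichotomy α.reverse β.reverse

end Colex

namespace WheelerRel

variable [LinearOrder A] {E : V → A → V → Prop} {r : V → V → Prop} {s u v : V}
  {α β : List A}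

theorem rel_or_eq_of_colexLt (hW : WheelerRel E r) (hdet : Deterministic E)
    (hs : ∀ u a, ¬ E u a s) (hα : Reaches E s α u) (hβ : Reaches E s β v)
    (h : ColexLt α β) : r u v ∨ u = v := by
  obtain ⟨-, hsrc, hlabel, hsame⟩ := hW
  induction hα generalizing β v with
  | nil =>
    rcases eq_or_ne β [] with rfl | hβne
    · exact .inr hβ.eq_of_nil.symm
    · exact .inl (hsrc _ _ hs (hβ.exists_edge_of_ne_nil hβne))
  | snoc hα' e ih =>
    cases hβ with
    | nil => exact absurd h not_colexLt_nil
    | snoc hβ' e' =>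
      rcases colexLt_append_singleton_iff.mp h with hab | ⟨rfl, h'⟩
      · exact .inl (hlabel _ _ _ _ _ _ e e' hab)
      · rcases ih hβ' h' with hr | rfl
        · exact hsame _ _ _ _ _ e e' hr
        · exact .inr (hdet _ _ _ _ e e')

theorem eq_of_colexLt_of_colexLt (hW : WheelerRel E r) (hdet : Deterministic E)
    (hs : ∀ u a, ¬ E u a s) {γ : List A} (hα : Reaches E s α u) (hβ : Reaches E s β v)
    (hγ : Reaches E s γ u) (h₁ : ColexLt α β) (h₂ : ColexLt β γ) : v = u := by
  rcases hW.rel_or_eq_of_colexLt hdet hs hα hβ h₁ with huv | rfl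
  · rcases hW.rel_or_eq_of_colexLt hdet hs hβ hγ h₂ with hvu | rfl
    · exact absurd (hW.1.2.1 _ _ _ huv hvu) (hW.1.1 u)
    · rfl
  · rfl

end WheelerRel

theorem Fintype.card_add_two_le_of_injective {ι W : Type*} [Fintype ι] [Fintype W]
    {f : ι → W} (hf : Function.Injective f) {a b : W} (hab : a ≠ b) (ha : ∀ i, f i ≠ a)
    (hb : ∀ i, f i ≠ b) : Fintype.card ι + 2 ≤ Fintype.card W := by
  classical
  calc Fintype.card ι + 2 = (insert a (insert b (Finset.univ.map ⟨f, hf⟩))).card := by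
        rw [Finset.card_insert_of_notMem (by simpa using ⟨hab, ha⟩),
          Finset.card_insert_of_notMem (by simpa using hb)]
        simp
    _ ≤ Fintype.card W := Finset.card_le_univ _

namespace Lm

-- `c`/`d`, `e`/`f` and `a`/`b` respectively, selected by a Boolean.
def lead (b : Bool) : Fin 6 := if b then 3 else 2

def trail (b : Bool) : Fin 6 := if b then 5 else 4

def bit (b : Bool) : Fin 6 := if b then 1 else 0

def IsBinary (B : List (Fin 6)) : Prop := ∀ x ∈ B, x = 0 ∨ x = 1

theorem lead_injective : Function.Injective lead := by decide

theorem trail_injective : Function.Injective trail := by decide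

theorem bit_injective : Function.Injective bit := by decide

theorem isBinary_append {B C : List (Fin 6)} (hB : IsBinary B) (hC : IsBinary C) :
    IsBinary (B ++ C) := by
  simpa [IsBinary, or_imp, forall_and] using And.intro hB hC

theorem isBinary_replicate_zero (k : ℕ) : IsBinary (List.replicate k 0) :=
  fun _ hx => .inl (List.eq_of_mem_replicate hx)

theorem isBinary_ofFn_bit {k : ℕ} (g : Fin k → Bool) : IsBinary (List.ofFn (bit ∘ g)) := by
  intro x hx
  obtain ⟨i, rfl⟩ := List.mem_ofFn.mp hx
  cases g i <;> simp [bit]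

variable {m : ℕ} {w : List (Fin 6)}

theorem mem_iff : w ∈ Lm m ↔
    ∃ b B, IsBinary B ∧ B.length = m ∧ w = lead b :: (B ++ [trail b]) := by
  constructor
  · rintro ⟨B, hl, hB, rfl | rfl⟩
    exacts [⟨false, B, hB, hl, rfl⟩, ⟨true, B, hB, hl, rfl⟩]
  · rintro ⟨_ | _, B, hB, hl, rfl⟩
    exacts [⟨B, hl, hB, .inl rfl⟩, ⟨B, hl, hB, .inr rfl⟩]

theorem length_of_mem (h : w ∈ Lm m) : w.length = m + 2 := by
  obtain ⟨b, B, -, hl, rfl⟩ := mem_iff.mp h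
  simp [hl]

theorem eq_of_lead_trail_mem {b b' : Bool} {B : List (Fin 6)}
    (h : lead b :: (B ++ [trail b']) ∈ Lm m) : b = b' ∧ B.length = m := by
  obtain ⟨c, C, -, hl, he⟩ := mem_iff.mp h
  obtain ⟨hb, he⟩ := List.cons_eq_cons.mp he
  obtain ⟨rfl, hb'⟩ := List.append_inj' he rfl
  exact ⟨(lead_injective hb).trans (trail_injective (List.singleton_inj.mp hb')).symm, hl⟩

theorem lead_append_mem {b : Bool} {B : List (Fin 6)} (hB : IsBinary B) (hl : B.length ≤ m) :
    lead b :: B ++ (List.replicate (m - B.length) 0 ++ [trail b]) ∈ Lm m :=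
  mem_iff.mpr ⟨b, B ++ List.replicate (m - B.length) 0,
    isBinary_append hB (isBinary_replicate_zero _), by simp; omega, by simp⟩

/-- The prefixes `cB`, `dB` of `L_m` with `|B| ≤ m`. -/
abbrev ShortPrefix (m : ℕ) := Bool × Σ k : Fin (m + 1), Fin k → Bool

def prefixWord (x : ShortPrefix m) : List (Fin 6) := lead x.1 :: List.ofFn (bit ∘ x.2.2)

theorem card_shortPrefix_add_two : Fintype.card (ShortPrefix m) + 2 = 2 ^ (m + 2) := by
  have hsum : ∑ k ∈ Finset.range (m + 1), 2 ^ k = 2 ^ (m + 1) - 1 := by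
    simpa using Nat.geomSum_eq le_rfl (m + 1)
  have hpos := Nat.one_le_two_pow (n := m + 1)
  simp only [Fintype.card_prod, Fintype.card_bool, Fintype.card_sigma, Fintype.card_fun,
    Fintype.card_fin]
  rw [Fin.sum_univ_eq_sum_range (2 ^ ·), hsum, pow_succ 2 (m + 1)]
  omega

section LowerBound

variable {W : Type*} {E : W → Fin 6 → W → Prop} {F : Set W} {s u : W}

theorem exists_reaches_prefixWord (hL : Lang E F s = Lm m) (x : ShortPrefix m) :
    ∃ u, Reaches E s (prefixWord x) u := by
  have hmem := lead_append_mem (b := x.1) (isBinary_ofFn_bit x.2.2)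
    (by simpa using x.2.1.is_le)
  rw [← hL] at hmem
  obtain ⟨w, -, hw⟩ := hmem
  obtain ⟨u, hu, -⟩ := hw.exists_of_append
  exact ⟨u, hu⟩

/-- Myhill–Nerode: the lead letter and the length of a short prefix determine which
completions are accepted, so both are readable off the state it reaches. -/
theorem eq_lead_and_length_of_reaches (hdet : Deterministic E) (hL : Lang E F s = Lm m)
    {x y : ShortPrefix m} (hx : Reaches E s (prefixWord x) u)
    (hy : Reaches E s (prefixWord y) u) : x.1 = y.1 ∧ x.2.1 = y.2.1 := by
  obtain ⟨b, k, g⟩ := x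
  obtain ⟨b', k', g'⟩ := y
  have hmem : prefixWord (b, ⟨k, g⟩) ++ _ ∈ Lm m :=
    lead_append_mem (isBinary_ofFn_bit g) (by simpa using k.is_le)
  rw [← hL] at hmem
  have hmem' := hx.append_mem_lang hdet hy hmem
  rw [hL] at hmem'
  obtain ⟨hb, hlen⟩ := eq_of_lead_trail_mem (B := List.ofFn (bit ∘ g') ++ _)
    (by simpa [prefixWord] using hmem')
  simp only [List.length_append, List.length_ofFn, List.length_replicate] at hlen
  exact ⟨hb.symm, Fin.ext (show (k : ℕ) = k' by have := k.is_le; omega)⟩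

variable {r : W → W → Prop}

theorem false_of_reaches_of_colexLt (hW : WheelerRel E r) (hdet : Deterministic E)
    (hs : ∀ u a, ¬ E u a s) (hL : Lang E F s = Lm m) {b : Bool} {k : Fin (m + 1)}
    {g₁ g₂ : Fin k → Bool}
    (hlt : ColexLt (List.ofFn (bit ∘ g₁)) (List.ofFn (bit ∘ g₂)))
    (h₁ : Reaches E s (prefixWord (b, ⟨k, g₁⟩)) u)
    (h₂ : Reaches E s (prefixWord (b, ⟨k, g₂⟩)) u) : False := by
  have hcd (g : Fin k → Bool) :
      ColexLt (prefixWord (false, ⟨k, g⟩)) (prefixWord (true, ⟨k, g⟩)) :=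
    colexLt_cons_of_lt _ (show lead false < lead true by decide)
  have hdc : ColexLt (prefixWord (true, ⟨k, g₁⟩)) (prefixWord (false, ⟨k, g₂⟩)) :=
    hlt.cons (by simp) _ _
  obtain ⟨v₁, hv₁⟩ := exists_reaches_prefixWord hL (true, ⟨k, g₁⟩)
  obtain ⟨v₂, hv₂⟩ := exists_reaches_prefixWord hL (false, ⟨k, g₂⟩)
  -- `c B₁ < d B₁ < c B₂ < d B₂`: either pair reaching `u` spans both `d B₁` and `c B₂`.
  have hv : v₁ = v₂ := by
    cases b
    · exact (hW.eq_of_colexLt_of_colexLt hdet hs h₁ hv₁ h₂ (hcd g₁) hdc).trans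
        (h₂.unique hdet hv₂)
    · exact (hv₁.unique hdet h₁).trans
        (hW.eq_of_colexLt_of_colexLt hdet hs h₁ hv₂ h₂ hdc (hcd g₂)).symm
  exact Bool.noConfusion (eq_lead_and_length_of_reaches hdet hL hv₁ (hv ▸ hv₂)).1

theorem eq_of_reaches_prefixWord (hW : WheelerRel E r) (hdet : Deterministic E)
    (hs : ∀ u a, ¬ E u a s) (hL : Lang E F s = Lm m) {x y : ShortPrefix m}
    (hx : Reaches E s (prefixWord x) u) (hy : Reaches E s (prefixWord y) u) : x = y := by
  obtain ⟨b, k, g₁⟩ := x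
  obtain ⟨b', k', g₂⟩ := y
  obtain ⟨rfl, rfl⟩ := eq_lead_and_length_of_reaches hdet hL hx hy
  suffices g₁ = g₂ by rw [this]
  by_contra hne
  have hB : List.ofFn (bit ∘ g₁) ≠ List.ofFn (bit ∘ g₂) :=
    fun h => hne (bit_injective.comp_left (List.ofFn_injective h))
  rcases colexLt_trichotomous (List.ofFn (bit ∘ g₁)) (List.ofFn (bit ∘ g₂))
    with hlt | heq | hlt
  · exact false_of_reaches_of_colexLt hW hdet hs hL hlt hx hy
  · exact hB heq
  · exact false_of_reaches_of_colexLt hW hdet hs hL hlt hy hx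

theorem two_pow_le_card [Fintype W] (hW : WheelerRel E r) (hdet : Deterministic E)
    (hs : ∀ u a, ¬ E u a s) (hL : Lang E F s = Lm m) : 2 ^ (m + 2) ≤ Fintype.card W := by
  choose q hq using exists_reaches_prefixWord hL
  have hq_inj : Function.Injective q :=
    fun x y hxy => eq_of_reaches_prefixWord hW hdet hs hL (hq x) (hxy ▸ hq y)
  have hq_ne_s (x : ShortPrefix m) : q x ≠ s := fun h => by
    obtain ⟨u, a, e⟩ := (hq x).exists_edge_of_ne_nil (List.cons_ne_nil _ _)
    exact hs u a (h ▸ e)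
  have hnotF {w : List (Fin 6)} {v : W} (hw : Reaches E s w v) (hlen : w.length ≤ m + 1) :
      v ∉ F := fun hv => by
    have := length_of_mem (hL ▸ ⟨v, hv, hw⟩ : w ∈ Lm m)
    omega
  obtain ⟨acc, haccF, -⟩ :
      lead false :: [] ++ (List.replicate m 0 ++ [trail false]) ∈ Lang E F s :=
    hL ▸ lead_append_mem (fun _ h => by simp at h) (Nat.zero_le m)
  rw [← card_shortPrefix_add_two]
  refine Fintype.card_add_two_le_of_injective hq_inj (a := s) (b := acc)
    (fun h => hnotF .nil (by simp) (h ▸ haccF)) hq_ne_s (fun x h => ?_)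
  exact hnotF (hq x) (by simpa [prefixWord] using x.2.1.is_le) (h ▸ haccF)

end LowerBound

/-- `none` is the start state, `some none` the final state, and `some (some (b, i))` the state
after reading `lead b` and `i` binary letters. -/
abbrev GadgetState (m : ℕ) := Option (Option (Bool × Fin (m + 1)))

inductive gadget (m : ℕ) : GadgetState m → Fin 6 → GadgetState m → Prop
  | start (b : Bool) : gadget m none (lead b) (some (some (b, 0)))
  | step (b : Bool) {x : Fin 6} (hx : x = 0 ∨ x = 1) (i : Fin m) :
      gadget m (some (some (b, i.castSucc))) x (some (some (b, i.succ)))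
  | finish (b : Bool) : gadget m (some (some (b, Fin.last m))) (trail b) (some none)

/-- The target of a `gadget` edge as a function of its source and label; the value out of the
final state, which has no outgoing edges, is junk. -/
def gadgetNext : GadgetState m → Fin 6 → GadgetState m
  | none, a => some (some (decide (a = 3), 0))
  | some (some (b, i)), _ => if i = Fin.last m then some none else some (some (b, i + 1))
  | some none, _ => none

theorem eq_gadgetNext_of_gadget {u v : GadgetState m} {a : Fin 6} (h : gadget m u a v) :
    v = gadgetNext u a := by
  cases h with
  | start b => cases b <;> rfl
  | step b _ i => simp [gadgetNext, Fin.castSucc_ne_last, Fin.coeSucc_eq_succ]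
  | finish b => simp [gadgetNext]

theorem gadget_deterministic : Deterministic (gadget m) :=
  fun _ _ _ _ h h' => (eq_gadgetNext_of_gadget h).trans (eq_gadgetNext_of_gadget h').symm

theorem eq_none_of_forall_not_gadget {v : GadgetState m} (hv : ∀ u a, ¬ gadget m u a v) :
    v = none := by
  rcases v with _ | _ | ⟨b, i⟩
  · rfl
  · exact (hv _ _ (.finish false)).elim
  · induction i using Fin.cases with
    | zero => exact (hv _ _ (.start b)).elim
    | succ j => exact (hv _ _ (.step b (.inl rfl) j)).elim

def gadgetSpells (m : ℕ) : GadgetState m → List (Fin 6) → Prop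
  | none, w => w = []
  | some none, w => w ∈ Lm m
  | some (some (b, i)), w => ∃ B, IsBinary B ∧ B.length = i ∧ w = lead b :: B

theorem reaches_gadget_lead {b : Bool} {B : List (Fin 6)} (hB : IsBinary B) {i : Fin (m + 1)}
    (hi : B.length = i) : Reaches (gadget m) none (lead b :: B) (some (some (b, i))) := by
  induction B using List.reverseRecOn generalizing i with
  | nil =>
    obtain rfl : i = 0 := Fin.ext hi.symm
    exact Reaches.nil.snoc (gadget.start b)
  | append_singleton B x ih =>
    have hB' : IsBinary B := fun y hy => hB y (by simp [hy])
    have hlt : B.length < m := by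
      have := i.is_lt
      simp only [List.length_append, List.length_singleton] at hi
      omega
    obtain rfl : i = (⟨B.length, hlt⟩ : Fin m).succ := Fin.ext (by simpa using hi.symm)
    simpa using (ih hB' rfl).snoc (gadget.step b (hB x (by simp)) ⟨B.length, hlt⟩)

theorem reaches_gadget_iff {w : List (Fin 6)} {v : GadgetState m} :
    Reaches (gadget m) none w v ↔ gadgetSpells m v w := by
  constructor
  · intro h
    induction h with
    | nil => rfl
    | snoc _ e ih =>
      cases e with
      | start b => exact ⟨[], fun _ h => by simp at h, rfl, by rw [show _ = [] from ih]; rfl⟩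
      | step b hx i =>
        obtain ⟨B, hB, hl, rfl⟩ := ih
        exact ⟨B ++ [_], isBinary_append hB fun y hy => List.mem_singleton.mp hy ▸ hx,
          by simp [hl], by simp⟩
      | finish b =>
        obtain ⟨B, hB, hl, rfl⟩ := ih
        exact mem_iff.mpr ⟨b, B, hB, by simpa using hl, by simp⟩
  · intro h
    rcases v with _ | _ | ⟨b, i⟩
    · exact h ▸ .nil
    · obtain ⟨b, B, hB, hl, rfl⟩ := mem_iff.mp h
      simpa using (reaches_gadget_lead (i := Fin.last m) hB hl).snoc (gadget.finish b)
    · obtain ⟨B, hB, hl, rfl⟩ := h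
      exact reaches_gadget_lead hB hl

theorem exists_reaches_gadget (v : GadgetState m) : ∃ w, Reaches (gadget m) none w v := by
  suffices ∃ w, gadgetSpells m v w from this.imp fun _ => reaches_gadget_iff.mpr
  rcases v with _ | _ | ⟨b, i⟩
  · exact ⟨[], rfl⟩
  · exact ⟨_, lead_append_mem (b := false) (isBinary_replicate_zero m) (by simp)⟩
  · exact ⟨_, _, isBinary_replicate_zero i, List.length_replicate, rfl⟩

theorem lang_gadget : Lang (gadget m) {some none} none = Lm m := by
  ext w
  simp [Lang, reaches_gadget_iff, gadgetSpells]

theorem card_gadgetState : Fintype.card (GadgetState m) = 2 * m + 4 := by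
  simp only [Fintype.card_option, Fintype.card_prod, Fintype.card_bool, Fintype.card_fin]
  ring

end Lm

theorem stmt18_general (m : ℕ) :
    (∀ (W : Type) (_ : Fintype W) (E : W → Fin 6 → W → Prop) (F : Set W) (s : W)
        (r : W → W → Prop),
        (∀ u a v v', E u a v → E u a v' → v = v') →
        (∀ u a, ¬ E u a s) →
        (∀ x : W, (∀ u a, ¬ E u a x) → x = s) →
        (∀ x : W, ∃ α, Reaches E s α x) →
        WheelerRel E r →
        Lang E F s = Lm m →
        2 ^ (m + 2) ≤ Fintype.card W) ∧
    (∃ (W : Type) (_ : Fintype W) (E : W → Fin 6 → W → Prop) (F : Set W) (s : W),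
        (∀ u a v v', E u a v → E u a v' → v = v') ∧
        (∀ u a, ¬ E u a s) ∧
        (∀ x : W, (∀ u a, ¬ E u a x) → x = s) ∧
        (∀ x : W, ∃ α, Reaches E s α x) ∧
        Fintype.card W ≤ 4 * m + 5 ∧
        Lang E F s = Lm m) := by
  refine ⟨fun W _ E F s r hdet hs _ _ hW hL => Lm.two_pow_le_card hW hdet hs hL, ?_⟩
  refine ⟨Lm.GadgetState m, inferInstance, Lm.gadget m, {some none}, none,
    Lm.gadget_deterministic, by rintro _ _ ⟨⟩, fun _ => Lm.eq_none_of_forall_not_gadget,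
    Lm.exists_reaches_gadget, ?_, Lm.lang_gadget⟩
  rw [Lm.card_gadgetState]
  omega

/-- Exponential blow-up: every Wheeler DFA recognizing `L_m` has at least `2^(m+2)`
states, while `L_m` is recognized by a DFA with `4m + 5 = O(m)` states. Hence the
minimum WDFA equivalent to an acyclic DFA with `n` states has `Ω(2^(n/4))` states in
the worst case. -/
theorem stmt18 (m : ℕ) (hm : 1 ≤ m) :
    (∀ (W : Type) (_ : Fintype W) (E : W → Fin 6 → W → Prop) (F : Set W) (s : W)
        (r : W → W → Prop),
        (∀ u a v v', E u a v → E u a v' → v = v') →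
        (∀ u a, ¬ E u a s) →
        (∀ x : W, (∀ u a, ¬ E u a x) → x = s) →
        (∀ x : W, ∃ α, Reaches E s α x) →
        WheelerRel E r →
        Lang E F s = Lm m →
        2 ^ (m + 2) ≤ Fintype.card W) ∧
    (∃ (W : Type) (_ : Fintype W) (E : W → Fin 6 → W → Prop) (F : Set W) (s : W),
        (∀ u a v v', E u a v → E u a v' → v = v') ∧
        (∀ u a, ¬ E u a s) ∧
        (∀ x : W, (∀ u a, ¬ E u a x) → x = s) ∧
        (∀ x : W, ∃ α, Reaches E s α x) ∧
        Fintype.card W ≤ 4 * m + 5 ∧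
        Lang E F s = Lm m) :=
  stmt18_general m
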